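/- Let φ be α-exponentially concave and smooth on open convex Ω ⊆ ℝ^d with -D²φ - α(Dφ)(Dφ)ᵀ strictly positive definite and 1 - α Dφ(ξ)·ξ > 0 on Ω. Then the α-gradient map D^{(α)}φ(ξ) = Dφ(ξ)/(1 - α Dφ(ξ)·ξ) is injective on Ω. -/

import Mathlib

open scoped RealInnerProductSpace

noncomputable def alphaGrad {d : ℕ} (α : ℝ)
    (Dφ : EuclideanSpace ℝ (Fin d) → EuclideanSpace ℝ (Fin d))
    (ξ : EuclideanSpace ℝ (Fin d)) : EuclideanSpace ℝ (Fin d) :=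
  (1 - α * ⟪Dφ ξ, ξ⟫)⁻¹ • Dφ ξ

private lemma key_ineq {d : ℕ} {Ω : Set (EuclideanSpace ℝ (Fin d))}
    (hconv : Convex ℝ Ω) {α : ℝ} (hα : 0 < α)
    {φ : EuclideanSpace ℝ (Fin d) → ℝ}
    {Dφ : EuclideanSpace ℝ (Fin d) → EuclideanSpace ℝ (Fin d)}
    {Hφ : EuclideanSpace ℝ (Fin d) →
      EuclideanSpace ℝ (Fin d) →L[ℝ] EuclideanSpace ℝ (Fin d)}
    (hgrad : ∀ ζ ∈ Ω, HasGradientAt φ (Dφ ζ) ζ)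
    (hhess : ∀ ζ ∈ Ω, HasFDerivAt Dφ (Hφ ζ) ζ)
    (hPD : ∀ ζ ∈ Ω, ∀ v : EuclideanSpace ℝ (Fin d), v ≠ 0 →
      0 < -⟪v, Hφ ζ v⟫ - α * ⟪Dφ ζ, v⟫ ^ 2)
    {x y : EuclideanSpace ℝ (Fin d)} (hx : x ∈ Ω) (hy : y ∈ Ω) (hne : x ≠ y) :
    Real.exp (α * φ x) < Real.exp (α * φ y) * (1 + α * ⟪Dφ y, x - y⟫) := by
  set v : EuclideanSpace ℝ (Fin d) := x - y with hv
  have hv0 : v ≠ 0 := sub_ne_zero.2 hne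
  set c : ℝ → EuclideanSpace ℝ (Fin d) := fun t => y + t • v with hc
  have hmem : ∀ t ∈ Set.Icc (0:ℝ) 1, c t ∈ Ω := by
    intro t ht
    have hrepr : c t = (1 - t) • y + t • x := by
      simp only [hc, hv, smul_sub]
      module
    rw [hrepr]
    exact hconv hy hx (by linarith [ht.2]) ht.1 (by ring)
  have hcderiv : ∀ t : ℝ, HasDerivAt c v t := by
    intro t
    simpa [hc] using ((hasDerivAt_id t).smul_const v).const_add y
  set f' : ℝ → ℝ := fun t => ⟪Dφ (c t), v⟫ with hf'
  set h : ℝ → ℝ := fun t => Real.exp (α * φ (c t)) with hh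
  set h' : ℝ → ℝ := fun t => α * (Real.exp (α * φ (c t)) * f' t) with hh'
  have hφd : ∀ t ∈ Set.Icc (0:ℝ) 1, HasDerivAt (fun t => φ (c t)) (f' t) t := by
    intro t ht
    have := ((hgrad _ (hmem t ht)).hasFDerivAt).comp_hasDerivAt t (hcderiv t)
    simp only [InnerProductSpace.toDual_apply_apply] at this
    exact this
  have hhd : ∀ t ∈ Set.Icc (0:ℝ) 1, HasDerivAt h (h' t) t := by
    intro t ht
    have := (Real.hasDerivAt_exp (α * φ (c t))).comp t ((hφd t ht).const_mul α)
    simpa [hh, hh', mul_comm, mul_assoc, mul_left_comm, Function.comp_def] using this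
  have hf'd : ∀ t ∈ Set.Icc (0:ℝ) 1, HasDerivAt f' ⟪v, Hφ (c t) v⟫ t := by
    intro t ht
    have hD : HasDerivAt (fun t => Dφ (c t)) (Hφ (c t) v) t :=
      (hhess _ (hmem t ht)).comp_hasDerivAt t (hcderiv t)
    have h0 := hD.inner ℝ (hasDerivAt_const t v)
    rw [inner_zero_right, zero_add,
      real_inner_comm v ((Hφ (c t)) v)] at h0
    exact h0
  have hh'd : ∀ t ∈ Set.Icc (0:ℝ) 1,
      HasDerivAt h' (α * (Real.exp (α * φ (c t)) *
        (α * f' t ^ 2 + ⟪v, Hφ (c t) v⟫))) t := by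
    intro t ht
    have := ((hhd t ht).mul (hf'd t ht)).const_mul α
    convert this using 1
    · rfl
    · rfl
    · rfl
    simp only [hh, hh']
    ring
  have hneg : ∀ t ∈ Set.Icc (0:ℝ) 1,
      α * (Real.exp (α * φ (c t)) * (α * f' t ^ 2 + ⟪v, Hφ (c t) v⟫)) < 0 := by
    intro t ht
    have hpd := hPD _ (hmem t ht) v hv0
    have h1 : α * f' t ^ 2 + ⟪v, Hφ (c t) v⟫ < 0 := by
      have hft : f' t = ⟪Dφ (c t), v⟫ := rfl
      rw [hft]
      linarith
    exact mul_neg_of_pos_of_neg hα (mul_neg_of_pos_of_neg (Real.exp_pos _) h1)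
  have hanti : StrictAntiOn h' (Set.Icc (0:ℝ) 1) := by
    apply strictAntiOn_of_deriv_neg (convex_Icc 0 1)
    · exact fun t ht => (hh'd t ht).continuousAt.continuousWithinAt
    · intro t ht
      rw [interior_Icc] at ht
      have ht' : t ∈ Set.Icc (0:ℝ) 1 := ⟨le_of_lt ht.1, le_of_lt ht.2⟩
      rw [(hh'd t ht').deriv]
      exact hneg t ht'
  obtain ⟨t0, ht0, hslope⟩ := exists_hasDerivAt_eq_slope h h' (by norm_num : (0:ℝ) < 1)
    (fun t ht => (hhd t ht).continuousAt.continuousWithinAt)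
    (fun t ht => hhd t ⟨le_of_lt ht.1, le_of_lt ht.2⟩)
  have hlt : h' t0 < h' 0 :=
    hanti (Set.left_mem_Icc.2 zero_le_one) ⟨le_of_lt ht0.1, le_of_lt ht0.2⟩ ht0.1
  rw [hslope] at hlt
  have hc1 : c 1 = x := by simp [hc, hv]
  have hc0 : c 0 = y := by simp [hc]
  have hE : Real.exp (α * φ x) - Real.exp (α * φ y) <
      α * (Real.exp (α * φ y) * ⟪Dφ y, x - y⟫) := by
    have e1 : h 1 = Real.exp (α * φ x) := by simp only [hh, hc1]
    have e0 : h 0 = Real.exp (α * φ y) := by simp only [hh, hc0]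
    have e2 : h' 0 = α * (Real.exp (α * φ y) * ⟪Dφ y, x - y⟫) := by
      simp only [hh', hf', hc0, hv]
    rw [e1, e0, e2] at hlt
    simpa using hlt
  nlinarith [hE]

/-- under smoothness, strict positive definiteness of
`-D²φ - α(Dφ)(Dφ)ᵀ` and the positivity condition, the `α`-gradient map is
injective on `Ω`. -/
theorem stmt8 {d : ℕ} (Ω : Set (EuclideanSpace ℝ (Fin d)))
    (hΩ : IsOpen Ω) (hconv : Convex ℝ Ω) (α : ℝ) (hα : 0 < α)
    (φ : EuclideanSpace ℝ (Fin d) → ℝ)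
    (Dφ : EuclideanSpace ℝ (Fin d) → EuclideanSpace ℝ (Fin d))
    (Hφ : EuclideanSpace ℝ (Fin d) →
      EuclideanSpace ℝ (Fin d) →L[ℝ] EuclideanSpace ℝ (Fin d))
    (hsmooth : ContDiffOn ℝ (⊤ : ℕ∞) φ Ω)
    (hgrad : ∀ ζ ∈ Ω, HasGradientAt φ (Dφ ζ) ζ)
    (hhess : ∀ ζ ∈ Ω, HasFDerivAt Dφ (Hφ ζ) ζ)
    (hconc : ConcaveOn ℝ Ω (fun ξ => Real.exp (α * φ ξ)))
    (hPD : ∀ ζ ∈ Ω, ∀ v : EuclideanSpace ℝ (Fin d), v ≠ 0 →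
      0 < -⟪v, Hφ ζ v⟫ - α * ⟪Dφ ζ, v⟫ ^ 2)
    (hpos : ∀ ζ ∈ Ω, 0 < 1 - α * ⟪Dφ ζ, ζ⟫) :
    Set.InjOn (alphaGrad α Dφ) Ω := by
  intro ξ hξ ξ' hξ' heq
  by_contra hne
  set p : ℝ := ⟪Dφ ξ, ξ⟫ with hp
  set q : ℝ := ⟪Dφ ξ', ξ⟫ with hq
  set r : ℝ := ⟪Dφ ξ, ξ'⟫ with hr
  set s : ℝ := ⟪Dφ ξ', ξ'⟫ with hs
  have ha : 0 < 1 - α * p := hpos ξ hξ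
  have hb : 0 < 1 - α * s := hpos ξ' hξ'
  have e1 : (1 - α * p)⁻¹ * p = (1 - α * s)⁻¹ * q := by
    have h0 := congrArg (fun w => (⟪w, ξ⟫ : ℝ)) heq
    simp only [alphaGrad] at h0
    rw [real_inner_smul_left, real_inner_smul_left] at h0
    exact h0
  have e2 : (1 - α * p)⁻¹ * r = (1 - α * s)⁻¹ * s := by
    have h0 := congrArg (fun w => (⟪w, ξ'⟫ : ℝ)) heq
    simp only [alphaGrad] at h0
    rw [real_inner_smul_left, real_inner_smul_left] at h0
    exact h0
  have e1' : p * (1 - α * s) = q * (1 - α * p) := by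
    field_simp at e1
    linarith [e1]
  have e2' : r * (1 - α * s) = s * (1 - α * p) := by
    field_simp at e2
    linarith [e2]
  -- key strict inequalities from key_ineq
  have key1 : Real.exp (α * φ ξ) < Real.exp (α * φ ξ') * (1 + α * (q - s)) := by
    have := key_ineq hconv hα hgrad hhess hPD hξ hξ' hne
    rwa [inner_sub_right, ← hq, ← hs] at this
  have key2 : Real.exp (α * φ ξ') < Real.exp (α * φ ξ) * (1 + α * (r - p)) := by
    have := key_ineq hconv hα hgrad hhess hPD hξ' hξ (Ne.symm hne)
    rwa [inner_sub_right, ← hr, ← hp] at this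
  have hau : (1 - α * p) * (1 + α * (q - s)) = 1 - α * s := by
    linear_combination (-α) * e1'
  have hbw : (1 - α * s) * (1 + α * (r - p)) = 1 - α * p := by
    linear_combination α * e2'
  have hE1 : 0 < Real.exp (α * φ ξ) := Real.exp_pos _
  have hE2 : 0 < Real.exp (α * φ ξ') := Real.exp_pos _
  have h1 : Real.exp (α * φ ξ) * (1 - α * p) < Real.exp (α * φ ξ') * (1 - α * s) := by
    have hm := mul_lt_mul_of_pos_right key1 ha
    calc Real.exp (α * φ ξ) * (1 - α * p) < Real.exp (α * φ ξ') * (1 + α * (q - s)) * (1 - α * p) := hm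
    _ = Real.exp (α * φ ξ') * ((1 - α * p) * (1 + α * (q - s))) := by ring
    _ = Real.exp (α * φ ξ') * (1 - α * s) := by rw [hau]
  have h2 : Real.exp (α * φ ξ') * (1 - α * s) < Real.exp (α * φ ξ) * (1 - α * p) := by
    have hm := mul_lt_mul_of_pos_right key2 hb
    calc Real.exp (α * φ ξ') * (1 - α * s) < Real.exp (α * φ ξ) * (1 + α * (r - p)) * (1 - α * s) := hm
    _ = Real.exp (α * φ ξ) * ((1 - α * s) * (1 + α * (r - p))) := by ring
    _ = Real.exp (α * φ ξ) * (1 - α * p) := by rw [hbw]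
  linarith
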